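/- Let q ∈ (1,2]. For every summable f : ℤ → ℝ with f ≥ 0 and every x ∈ ℤ, Γ_q(f)(x) = q(q−1) Σ_{y∈ℤ} K_s(x−y) (f(x)−f(y))² ∫₀¹ (1−u)·f(x)^{2−q} / ((1−u)f(x) + u f(y))^{2−q} du. -/

import Mathlib

open MeasureTheory Real

/-- The kernel `K_s` of the fractional discrete Laplacian on `ℤ`. -/
noncomputable def Ker (s : ℝ) (m : ℤ) : ℝ :=
  if m = 0 then 0
  else ((4 : ℝ) ^ s * Real.Gamma (1 / 2 + s) / (Real.sqrt Real.pi * |Real.Gamma (-s)|)) *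
    (Real.Gamma ((m.natAbs : ℝ) - s) / Real.Gamma ((m.natAbs : ℝ) + 1 + s))

/-- The fractional discrete Laplacian `L = (-Δ)^s` acting pointwise. -/
noncomputable def Lop (s : ℝ) (f : ℤ → ℝ) : ℤ → ℝ :=
  fun x => ∑' y : ℤ, (f x - f y) * Ker s (x - y)

/-- The heat semigroup `P_t = exp (-t L)`, given by the exponential series of the
bounded operator `-tL` (evaluated pointwise). -/
noncomputable def heat (s t : ℝ) (f : ℤ → ℝ) : ℤ → ℝ :=
  fun x => ∑' n : ℕ, ((-t) ^ n / (n.factorial : ℝ)) * ((Lop s)^[n] f x)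

/-- The squared modulus of the gradient, `|∇f|²(x) = Σ_y K_s(y-x) (f x - f y)²`. -/
noncomputable def gradSq (s : ℝ) (f : ℤ → ℝ) (x : ℤ) : ℝ :=
  ∑' y : ℤ, Ker s (y - x) * (f x - f y) ^ 2

/-- The squared modulus of the modified gradient,
`|∇̃f|²(x) = Σ_{y : |f y| < |f x|} K_s(y-x) (f x - f y)²`. -/
noncomputable def mgradSq (s : ℝ) (f : ℤ → ℝ) (x : ℤ) : ℝ :=
  ∑' y : {y : ℤ // |f y| < |f x|}, Ker s ((y : ℤ) - x) * (f x - f (y : ℤ)) ^ 2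

/-- The `ℓ^q` norm on `ℤ` with counting measure (for finite `q`). -/
noncomputable def lqNorm (q : ℝ) (f : ℤ → ℝ) : ℝ :=
  (∑' x : ℤ, |f x| ^ q) ^ (1 / q)

/-- The pseudo-gradient `Γ_q(f) = q f · L f - f^{2-q} · L (f^q)` (real powers). -/
noncomputable def GammaQ (s q : ℝ) (f : ℤ → ℝ) : ℤ → ℝ :=
  fun x => q * f x * Lop s f x - f x ^ (2 - q) * Lop s (fun y => f y ^ q) x

/-!
Expanding `t ↦ t ^ q` to second order around `f x` with integral remainder gives, for each `y`,
`q a (a - b) - a^(2-q) (a^q - b^q) = q (q-1) (a-b)² ∫₀¹ (1-u) a^(2-q) / ((1-u) a + u b)^(2-q) du`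
with `a = f x`, `b = f y`; summing against `K_s (x - y)` gives the theorem. The summation can be
split into the two Laplacians because `K_s` is summable: with `a_n = Γ(n-s)/Γ(n+s)` one has
`Γ(n-s)/Γ(n+1+s) = (a_n - a_{n+1}) / (2s)`, a telescoping series of nonnegative terms.
-/

open Filter Set

lemma Gamma_sub_div_Gamma_add_one_add {s x : ℝ} (hs : 0 < s) (hx : s < x) :
    Gamma (x - s) / Gamma (x + 1 + s) =
      (Gamma (x - s) / Gamma (x + s) - Gamma (x + 1 - s) / Gamma (x + 1 + s)) / (2 * s) := by
  have hpos : 0 < Gamma (x + s) := Gamma_pos_of_pos (by linarith)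
  have hxs : x + s ≠ 0 := by linarith
  rw [show x + 1 - s = (x - s) + 1 by ring, show x + 1 + s = (x + s) + 1 by ring,
    Gamma_add_one (by linarith), Gamma_add_one (by linarith)]
  field_simp
  ring

lemma summable_Gamma_sub_div_Gamma_add_one_add {s : ℝ} (hs0 : 0 < s) (hs1 : s < 1) :
    Summable fun n : ℕ => Gamma ((n + 1 : ℝ) - s) / Gamma ((n + 1 : ℝ) + 1 + s) := by
  set a : ℕ → ℝ := fun n => Gamma ((n + 1 : ℝ) - s) / Gamma ((n + 1 : ℝ) + s)
  have hx (n : ℕ) : s < (n + 1 : ℝ) := by linarith [(n.cast_nonneg : (0 : ℝ) ≤ n)]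
  have ha_nonneg (n : ℕ) : 0 ≤ a n :=
    (div_pos (Gamma_pos_of_pos (by linarith [hx n])) (Gamma_pos_of_pos (by linarith))).le
  have htelescope (n : ℕ) :
      Gamma ((n + 1 : ℝ) - s) / Gamma ((n + 1 : ℝ) + 1 + s) = (a n - a (n + 1)) / (2 * s) := by
    rw [Gamma_sub_div_Gamma_add_one_add hs0 (hx n)]
    push_cast [a]
    ring_nf
  refine summable_of_sum_range_le (c := a 0 / (2 * s)) (fun n => ?_) (fun N => ?_)
  · exact (div_pos (Gamma_pos_of_pos (by linarith [hx n])) (Gamma_pos_of_pos (by linarith))).le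
  · simp_rw [htelescope, ← Finset.sum_div, Finset.sum_range_sub']
    gcongr
    linarith [ha_nonneg N]

lemma Ker_neg (s : ℝ) (m : ℤ) : Ker s (-m) = Ker s m := by
  simp [Ker]

lemma summable_Ker {s : ℝ} (hs0 : 0 < s) (hs1 : s < 1) : Summable (Ker s) := by
  have hnat : Summable fun n : ℕ => Ker s n := by
    rw [← summable_nat_add_iff 1]
    refine ((summable_Gamma_sub_div_Gamma_add_one_add hs0 hs1).mul_left
      ((4 : ℝ) ^ s * Gamma (1 / 2 + s) / (√π * |Gamma (-s)|))).congr fun n => ?_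
    rw [Ker, if_neg (by omega), Int.natAbs_natCast]
    push_cast
    rfl
  exact hnat.of_nat_of_neg (by simpa only [Ker_neg] using hnat)

lemma Summable.rpow_of_nonneg {ι : Type*} {f : ι → ℝ} (hf : Summable f) (hf0 : ∀ i, 0 ≤ f i)
    {q : ℝ} (hq : 1 ≤ q) : Summable fun i => f i ^ q := by
  refine hf.of_norm_bounded_eventually ?_
  filter_upwards [hf.tendsto_cofinite_zero.eventually (eventually_le_nhds one_pos)] with i hi
  rw [Real.norm_of_nonneg (rpow_nonneg (hf0 i) q)]
  exact rpow_le_self_of_le_one (hf0 i) hi hq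

lemma summable_Lop_summand {s : ℝ} (hK : Summable (Ker s)) {g : ℤ → ℝ} (hg : Summable g)
    (x : ℤ) : Summable fun y => (g x - g y) * Ker s (x - y) := by
  have hKx : Summable fun y => Ker s (x - y) := hK.comp_injective sub_right_injective
  have hgK : Summable fun y => g y * Ker s (x - y) :=
    (summable_norm_iff.mpr hg).mul_tendsto_const hKx.tendsto_cofinite_zero
  simpa only [sub_mul] using (hKx.mul_left (g x)).sub hgK

lemma GammaQ_eq_tsum {s q : ℝ} {f : ℤ → ℝ} (hK : Summable (Ker s)) (hf : Summable f)
    (hfq : Summable fun y => f y ^ q) (x : ℤ) :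
    GammaQ s q f x = ∑' y, Ker s (x - y) *
      (q * f x * (f x - f y) - f x ^ (2 - q) * (f x ^ q - f y ^ q)) := by
  rw [GammaQ, Lop, Lop, ← tsum_mul_left, ← tsum_mul_left,
    ← ((summable_Lop_summand hK hf x).mul_left _).tsum_sub
      ((summable_Lop_summand hK hfq x).mul_left _)]
  exact tsum_congr fun y => by ring

lemma rpow_eq_taylor_integral_remainder {q a b : ℝ} (hq : 1 < q) (ha : 0 < a) (hb : 0 ≤ b) :
    b ^ q = a ^ q + q * a ^ (q - 1) * (b - a) +
      q * (q - 1) * (b - a) ^ 2 * ∫ u in (0 : ℝ)..1, (1 - u) * ((1 - u) * a + u * b) ^ (q - 2) := by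
  set ℓ : ℝ → ℝ := fun u => (1 - u) * a + u * b with hℓ
  set H : ℝ → ℝ := fun u => (1 - u) * (q * (b - a)) * ℓ u ^ (q - 1) + ℓ u ^ q
  have hℓ_pos (u : ℝ) (hu : u ∈ Ioo 0 1) : 0 < ℓ u := by
    have := mul_pos (sub_pos.mpr hu.2) ha
    have := mul_nonneg hu.1.le hb
    linarith
  have hℓ_deriv (u : ℝ) : HasDerivAt ℓ (b - a) u :=
    ((((hasDerivAt_id u).const_sub 1).mul_const a).add
      ((hasDerivAt_id u).mul_const b)).congr_deriv (by ring)
  have hH_deriv (u : ℝ) (hu : u ∈ Ioo 0 1) :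
      HasDerivAt H (q * (q - 1) * (b - a) ^ 2 * ((1 - u) * ℓ u ^ (q - 2))) u := by
    have hne : ℓ u ≠ 0 := (hℓ_pos u hu).ne'
    have := ((((hasDerivAt_id u).const_sub 1).mul_const (q * (b - a))).mul
      ((hℓ_deriv u).rpow_const (p := q - 1) (Or.inl hne))).add
      ((hℓ_deriv u).rpow_const (p := q) (Or.inl hne))
    exact this.congr_deriv (by rw [show q - 1 - 1 = q - 2 by ring]; simp only [id]; ring)
  have hH_cont : Continuous H := by
    have hℓ : Continuous ℓ := by fun_prop
    exact ((continuous_const.sub continuous_id).mul continuous_const).mul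
      (hℓ.rpow_const fun _ => Or.inr (by linarith)) |>.add
      (hℓ.rpow_const fun _ => Or.inr (by linarith))
  have hderiv_nonneg (u : ℝ) (hu : u ∈ Ioo 0 1) :
      0 ≤ q * (q - 1) * (b - a) ^ 2 * ((1 - u) * ℓ u ^ (q - 2)) := by
    have := sub_pos.mpr hu.2
    have := hℓ_pos u hu
    have : 0 < q - 1 := by linarith
    positivity
  -- For `b = 0` the segment reaches `0` at `u = 1`, where `ℓ ^ (q - 1)` may fail to be
  -- differentiable: FTC is used on `Ioo 0 1`, and the derivative is integrable being nonnegative.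
  have hFTC := intervalIntegral.integral_eq_sub_of_hasDerivAt_of_le zero_le_one
    hH_cont.continuousOn hH_deriv
    ((intervalIntegrable_iff_integrableOn_Ioc_of_le zero_le_one).mpr
      (intervalIntegral.integrableOn_deriv_of_nonneg hH_cont.continuousOn hH_deriv hderiv_nonneg))
  rw [intervalIntegral.integral_const_mul] at hFTC
  simp only [H, hℓ] at hFTC
  norm_num at hFTC
  linarith

lemma mul_sub_sub_rpow_mul_sub_eq_integral {q a b : ℝ} (hq1 : 1 < q) (hq2 : q ≤ 2) (ha : 0 ≤ a)
    (hb : 0 ≤ b) :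
    q * a * (a - b) - a ^ (2 - q) * (a ^ q - b ^ q) = q * (q - 1) * ((a - b) ^ 2 *
      ∫ u in (0 : ℝ)..1, (1 - u) * a ^ (2 - q) / ((1 - u) * a + u * b) ^ (2 - q)) := by
  rcases ha.eq_or_lt with rfl | ha
  -- `0 ^ (2 - q)` vanishes unless `q = 2`, where it is `0 ^ 0 = 1`.
  · rcases hq2.eq_or_lt with rfl | hq2
    · have : ∫ u in (0 : ℝ)..1, (1 - u) = 1 / 2 := by
        rw [intervalIntegral.integral_sub intervalIntegrable_const
          intervalIntegral.intervalIntegrable_id, integral_id]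
        norm_num
      norm_num [this]
      ring
    · simp [zero_rpow (by linarith : 2 - q ≠ 0), zero_rpow (by linarith : q ≠ 0)]
  · have hintegrand : EqOn (fun u => (1 - u) * a ^ (2 - q) / ((1 - u) * a + u * b) ^ (2 - q))
        (fun u => a ^ (2 - q) * ((1 - u) * ((1 - u) * a + u * b) ^ (q - 2))) (uIcc 0 1) := by
      intro u hu
      rw [uIcc_of_le zero_le_one] at hu
      have : 0 ≤ (1 - u) * a + u * b := by
        have := mul_nonneg (sub_nonneg.mpr hu.2) ha.le
        have := mul_nonneg hu.1 hb
        linarith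
      simp only [show q - 2 = -(2 - q) by ring, rpow_neg this]
      ring
    have ha_mul_q_sub_one : a ^ (2 - q) * a ^ (q - 1) = a := by
      rw [← rpow_add ha]; norm_num
    rw [intervalIntegral.integral_congr hintegrand, intervalIntegral.integral_const_mul,
      rpow_eq_taylor_integral_remainder hq1 ha hb]
    linear_combination (q * (b - a)) * ha_mul_q_sub_one

/-- Integral representation of the pseudo-gradient `Γ_q`. -/
theorem gammaQ_eq_integral_sum (s : ℝ) (hs : s ∈ Set.Ioo (0 : ℝ) 1) (q : ℝ)
    (hq : q ∈ Set.Ioc (1 : ℝ) 2) (f : ℤ → ℝ) (hf : Summable f) (hf0 : ∀ x, 0 ≤ f x)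
    (x : ℤ) :
    GammaQ s q f x = q * (q - 1) * ∑' y : ℤ, Ker s (x - y) * (f x - f y) ^ 2 *
      ∫ u in (0 : ℝ)..1, (1 - u) * f x ^ (2 - q) / ((1 - u) * f x + u * f y) ^ (2 - q) := by
  obtain ⟨hs0, hs1⟩ := hs
  obtain ⟨hq1, hq2⟩ := hq
  rw [GammaQ_eq_tsum (summable_Ker hs0 hs1) hf (hf.rpow_of_nonneg hf0 hq1.le), ← tsum_mul_left]
  refine tsum_congr fun y => ?_
  rw [mul_sub_sub_rpow_mul_sub_eq_integral hq1 hq2 (hf0 x) (hf0 y)]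
  ring
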